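/- arXiv:2605.26639 — 4 statements merged into one kernel-verified Lean document; each statement's English description precedes it below -/
import Mathlib

section
/- Let a ≠ 0 and let Y be a real random variable with E[Y] = b/a and E[Y²] = (c-θ)/a. Then for every x ∈ ℝ, the expected payoff E[1/2 + (x-Y)(c - b(x+Y) + a·x·Y)] - θ·x equals the constant 1/2 - θ·b/a (independent of x). -/
open MeasureTheory

/-- Against an opponent with mean `b/a` and second moment `(c-θ)/a`, the
cubic contest expected payoff is constant in own effort, equal to `1/2 - θb/a`. -/
theorem stmt6 {Ω : Type*} [MeasurableSpace Ω] (μ : Measure Ω)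
    [IsProbabilityMeasure μ]
    (a b c θ : ℝ) (ha : a ≠ 0) (Y : Ω → ℝ)
    (hY1 : Integrable Y μ)
    (hY2 : Integrable (fun ω => (Y ω)^2) μ)
    (hm1 : ∫ ω, Y ω ∂μ = b/a)
    (hm2 : ∫ ω, (Y ω)^2 ∂μ = (c - θ)/a) :
    ∀ x : ℝ,
      (∫ ω, ((1/2:ℝ) + (x - Y ω)*(c - b*(x + Y ω) + a*x*(Y ω))) ∂μ) - θ*x
        = 1/2 - θ*(b/a) := by
  intro x
  have key : ∀ ω, ((1/2:ℝ) + (x - Y ω)*(c - b*(x + Y ω) + a*x*(Y ω)))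
      = ((1/2 + c*x - b*x^2) + (a*x^2 - c)*Y ω) + (b - a*x)*(Y ω)^2 := by
    intro ω; ring
  simp_rw [key]
  have h1 : Integrable (fun ω => (1/2 + c*x - b*x^2) + (a*x^2 - c)*Y ω) μ :=
    (integrable_const _).add (hY1.const_mul _)
  have h2 : Integrable (fun ω => (b - a*x)*(Y ω)^2) μ := hY2.const_mul _
  rw [integral_add h1 h2,
    integral_add (integrable_const _) (hY1.const_mul _),
    integral_const, MeasureTheory.integral_const_mul, MeasureTheory.integral_const_mul, hm1, hm2]
  simp only [measure_univ, probReal_univ, ENNReal.toReal_one, smul_eq_mul, one_mul]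
  field_simp
  ring
end

section
/- Let b > 0, c > θ, and for a in the pure region define the stable root x*(a) = (b - √(b² - a(c-θ)))/a for a ≠ 0 and x*(0) = (c-θ)/(2b). Then x* is differentiable on the set {a : b² - a(c-θ) > 0} and satisfies dx*/da = x*(a)²/(2(b - a·x*(a))) > 0; in particular x* is strictly increasing there. -/
/-- On the pure-equilibrium region, the stable root `x*(a)` is differentiable
with derivative `x*²/(2(b - a x*)) > 0`, hence strictly increasing. -/
theorem stmt8 (b c θ : ℝ) (hb : 0 < b) (hcθ : θ < c) :
    let xstar : ℝ → ℝ := fun a =>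
      if a = 0 then (c - θ)/(2*b) else (b - Real.sqrt (b^2 - a*(c-θ)))/a
    (∀ a, 0 < b^2 - a*(c-θ) →
        HasDerivAt xstar ((xstar a)^2/(2*(b - a * xstar a))) a ∧
        0 < (xstar a)^2/(2*(b - a * xstar a))) ∧
    StrictMonoOn xstar {a | 0 < b^2 - a*(c-θ)} := by
  intro xstar
  have hk0 : 0 < c - θ := sub_pos.2 hcθ
  set k := c - θ with hkdef
  set g : ℝ → ℝ := fun t => k * (b + Real.sqrt (b^2 - t*k))⁻¹ with hg
  -- xstar agrees with g on the region
  have heq : ∀ t, 0 ≤ b^2 - t*k → xstar t = g t := by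
    intro t ht
    have hsq := Real.sq_sqrt ht
    have hsqnn := Real.sqrt_nonneg (b^2 - t*k)
    have hden : 0 < b + Real.sqrt (b^2 - t*k) := by linarith
    by_cases h0 : t = 0
    · subst h0
      simp only [xstar, g, if_pos rfl]
      rw [show b^2 - 0*k = b^2 by ring, Real.sqrt_sq hb.le,
        show b + b = 2*b by ring, div_eq_mul_inv]
    · simp only [xstar, g, if_neg h0]
      rw [div_eq_iff h0]
      field_simp
      nlinarith [hsq]
  have sOpen : IsOpen {t : ℝ | 0 < b^2 - t*k} :=
    isOpen_lt continuous_const (by continuity)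
  have hgderiv : ∀ a, 0 < b^2 - a*k →
      HasDerivAt g (k^2 / (2 * Real.sqrt (b^2 - a*k) * (b + Real.sqrt (b^2 - a*k))^2)) a := by
    intro a ha
    have hpos : 0 < Real.sqrt (b^2 - a*k) := Real.sqrt_pos.2 ha
    have hden : 0 < b + Real.sqrt (b^2 - a*k) := by linarith
    have hu : HasDerivAt (fun t : ℝ => b^2 - t*k) (-k) a := by
      simpa using ((hasDerivAt_id a).mul_const k).const_sub (b^2)
    have hs : HasDerivAt (fun t => Real.sqrt (b^2 - t*k))
        (-k / (2 * Real.sqrt (b^2 - a*k))) a := hu.sqrt ha.ne'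
    have hbs : HasDerivAt (fun t => b + Real.sqrt (b^2 - t*k))
        (-k / (2 * Real.sqrt (b^2 - a*k))) a := hs.const_add b
    have h := (hbs.inv hden.ne').const_mul k
    refine h.congr_deriv ?_
    field_simp
  have key : ∀ a, 0 < b^2 - a*k →
      HasDerivAt xstar ((xstar a)^2/(2*(b - a * xstar a))) a ∧
      0 < (xstar a)^2/(2*(b - a * xstar a)) := by
    intro a ha
    have hpos : 0 < Real.sqrt (b^2 - a*k) := Real.sqrt_pos.2 ha
    have hden : 0 < b + Real.sqrt (b^2 - a*k) := by linarith
    have hsq := Real.sq_sqrt ha.le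
    have hx : xstar a = k * (b + Real.sqrt (b^2 - a*k))⁻¹ := heq a ha.le
    have hxpos : 0 < xstar a := by
      rw [hx]; positivity
    have hbax : b - a * xstar a = Real.sqrt (b^2 - a*k) := by
      rw [hx]
      field_simp
      nlinarith [hsq]
    have hval : (xstar a)^2/(2*(b - a * xstar a)) =
        k^2 / (2 * Real.sqrt (b^2 - a*k) * (b + Real.sqrt (b^2 - a*k))^2) := by
      rw [hbax, hx]
      field_simp
    constructor
    · rw [hval]
      refine (hgderiv a ha).congr_of_eventuallyEq ?_
      exact Filter.eventuallyEq_of_mem (sOpen.mem_nhds ha)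
        (fun t ht => heq t (le_of_lt ht))
    · rw [hbax] at *
      exact div_pos (pow_pos hxpos 2) (by linarith)
  refine ⟨key, ?_⟩
  have hconv : Convex ℝ {t : ℝ | 0 < b^2 - t*k} := by
    have hset : {t : ℝ | 0 < b^2 - t*k} = Set.Iio (b^2/k) := by
      ext t
      simp only [Set.mem_setOf_eq, Set.mem_Iio, lt_div_iff₀ hk0]
      constructor <;> intro <;> linarith
    rw [hset]; exact convex_Iio _
  refine strictMonoOn_of_deriv_pos hconv
    (fun t ht => ((key t ht).1.continuousAt).continuousWithinAt) ?_
  intro x hx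
  rw [sOpen.interior_eq] at hx
  rw [(key x hx).1.deriv]
  exact (key x hx).2
end

section
/- Define E(a) = (b - √(b² - a(c-θ)))/a for 0 < a ≤ b²/(c-θ) (pure branch, with E extended by continuity) and E(a) = b/a for a ≥ b²/(c-θ) (mixed branch). Then E is continuous at the boundary a₀ = b²/(c-θ) with E(a₀) = b/a₀ = (c-θ)/b, E is increasing on (0, a₀], decreasing on [a₀, ∞), and hence attains its maximum over (0,∞) uniquely at a₀. -/
/-!
Write `k = c - θ`. Past `a₀ = b²/k` the radicand `b² - a k` is negative, so `√` returns `0` and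
both branches of `E` are the single expression `(b - √(b² - a k))/a`, which is continuous at
`a₀ ≠ 0`. On the pure branch rationalizing gives `E a = k/(b + √(b² - a k))`, increasing because
the square root decreases in `a`; on the mixed branch `E a = b/a` decreases.
-/

open Real Set

noncomputable def effort (b k a : ℝ) : ℝ := (b - √(b ^ 2 - a * k)) / a

section

variable {b k : ℝ}

lemma sq_sub_mul_nonpos_of_div_le (hk : 0 < k) {a : ℝ} (ha : b ^ 2 / k ≤ a) :
    b ^ 2 - a * k ≤ 0 := by
  rw [div_le_iff₀ hk] at ha
  linarith

lemma sq_sub_mul_nonneg_of_le_div (hk : 0 < k) {a : ℝ} (ha : a ≤ b ^ 2 / k) :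
    0 ≤ b ^ 2 - a * k := by
  rw [le_div_iff₀ hk] at ha
  linarith

lemma effort_eq_div_of_div_le (hk : 0 < k) {a : ℝ} (ha : b ^ 2 / k ≤ a) :
    effort b k a = b / a := by
  rw [effort, sqrt_eq_zero'.mpr (sq_sub_mul_nonpos_of_div_le hk ha), sub_zero]

lemma effort_eq_div_add_sqrt (hb : 0 < b) {a : ℝ} (ha : a ≠ 0) (hs : 0 ≤ b ^ 2 - a * k) :
    effort b k a = k / (b + √(b ^ 2 - a * k)) := by
  have hden : 0 < b + √(b ^ 2 - a * k) := by positivity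
  rw [effort, div_eq_div_iff ha hden.ne']
  linear_combination -sq_sqrt hs

lemma effort_div_sq (hb : 0 < b) (hk : 0 < k) : effort b k (b ^ 2 / k) = k / b := by
  rw [effort_eq_div_of_div_le hk le_rfl]
  field_simp

lemma continuousAt_effort {a : ℝ} (ha : a ≠ 0) : ContinuousAt (effort b k) a := by
  unfold effort
  fun_prop (disch := exact ha)

lemma strictMonoOn_effort (hb : 0 < b) (hk : 0 < k) :
    StrictMonoOn (effort b k) (Ioc 0 (b ^ 2 / k)) := by
  intro x ⟨hx, hxa⟩ y ⟨hy, hya⟩ hxy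
  have hsy := sq_sub_mul_nonneg_of_le_div hk hya
  rw [effort_eq_div_add_sqrt hb hx.ne' (sq_sub_mul_nonneg_of_le_div hk hxa),
    effort_eq_div_add_sqrt hb hy.ne' hsy]
  have hsqrt : √(b ^ 2 - y * k) < √(b ^ 2 - x * k) :=
    sqrt_lt_sqrt hsy (by nlinarith)
  exact div_lt_div_of_pos_left hk (by positivity) (by linarith)

lemma strictAntiOn_effort (hb : 0 < b) (hk : 0 < k) :
    StrictAntiOn (effort b k) (Ici (b ^ 2 / k)) := by
  intro x hx y hy hxy
  rw [effort_eq_div_of_div_le hk hx, effort_eq_div_of_div_le hk hy]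
  exact div_lt_div_of_pos_left hb (lt_of_lt_of_le (by positivity) hx) hxy

end

/-- Equilibrium effort is single-peaked in `a`: increasing on the pure branch,
decreasing on the mixed branch, continuous at the boundary `a₀ = b²/(c-θ)`,
and uniquely maximized there. -/
theorem stmt9 (b c θ : ℝ) (hb : 0 < b) (hcθ : θ < c) :
    let a₀ : ℝ := b^2/(c-θ)
    let E : ℝ → ℝ := fun a =>
      if a ≤ a₀ then (b - Real.sqrt (b^2 - a*(c-θ)))/a else b/a
    E a₀ = (c-θ)/b ∧ ContinuousAt E a₀ ∧
    StrictMonoOn E (Set.Ioc 0 a₀) ∧ StrictAntiOn E (Set.Ici a₀) ∧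
    (∀ a, 0 < a → a ≠ a₀ → E a < E a₀) := by
  intro a₀ E
  have hk : 0 < c - θ := sub_pos.mpr hcθ
  have ha₀ : 0 < a₀ := by positivity
  have hE : E = effort b (c - θ) := by
    funext a
    by_cases ha : a ≤ a₀
    · simp only [E, if_pos ha, effort]
    · simp only [E, if_neg ha, effort_eq_div_of_div_le hk (not_le.mp ha).le]
  rw [hE]
  have hmono := strictMonoOn_effort hb hk
  have hanti := strictAntiOn_effort hb hk
  refine ⟨effort_div_sq hb hk, continuousAt_effort ha₀.ne', hmono, hanti, fun a ha hne => ?_⟩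
  rcases hne.lt_or_gt with hlt | hgt
  · exact hmono ⟨ha, hlt.le⟩ ⟨ha₀, le_rfl⟩ hlt
  · exact hanti self_mem_Ici hgt.le hgt
end

section
/- Positivity boundary of Bayesian expected effort: let b > 0, Δ > 0, σ² > 0, and for a > 0 define E₁(a) = (b - R(a))/a with R(a) = √((b² - Δa + √((b² - Δa)² + σ²a²))/2). Then E₁(a) > 0 if and only if a < 4b²Δ/σ², E₁(a) = 0 at a = 4b²Δ/σ², and E₁(a) < 0 for a > 4b²Δ/σ². Moreover for a < 0, E₁(a) = (b - R(a))/a > 0. -/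
/-- Positivity boundary of Bayesian expected effort at `ā = 4b²Δ/σ²`. -/
theorem stmt13 (b Δ σ2 : ℝ) (hb : 0 < b) (hΔ : 0 < Δ) (hσ : 0 < σ2) :
    let R : ℝ → ℝ := fun a =>
      Real.sqrt ((b^2 - Δ*a + Real.sqrt ((b^2 - Δ*a)^2 + σ2*a^2))/2)
    let E₁ : ℝ → ℝ := fun a => (b - R a)/a
    (∀ a, 0 < a → (0 < E₁ a ↔ a < 4*b^2*Δ/σ2)) ∧
    E₁ (4*b^2*Δ/σ2) = 0 ∧
    (∀ a, 4*b^2*Δ/σ2 < a → E₁ a < 0) ∧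
    (∀ a, a < 0 → 0 < E₁ a) := by
  intro R E₁
  have hSnn : ∀ a : ℝ, |b^2 - Δ*a| ≤ Real.sqrt ((b^2 - Δ*a)^2 + σ2*a^2) := by
    intro a
    rw [← Real.sqrt_sq_eq_abs]
    apply Real.sqrt_le_sqrt
    nlinarith [sq_nonneg a]
  -- R a < b iff sqrt(f a) < b^2 + Δ a
  have hRlt : ∀ a : ℝ,
      (R a < b ↔ Real.sqrt ((b^2 - Δ*a)^2 + σ2*a^2) < b^2 + Δ*a) := by
    intro a
    rw [show R a = Real.sqrt ((b^2 - Δ*a + Real.sqrt ((b^2 - Δ*a)^2 + σ2*a^2))/2) from rfl,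
      Real.sqrt_lt' hb]
    constructor <;> intro h <;> nlinarith
  have hRgt : ∀ a : ℝ,
      (b < R a ↔ b^2 + Δ*a < Real.sqrt ((b^2 - Δ*a)^2 + σ2*a^2)) := by
    intro a
    rw [show R a = Real.sqrt ((b^2 - Δ*a + Real.sqrt ((b^2 - Δ*a)^2 + σ2*a^2))/2) from rfl,
      Real.lt_sqrt hb.le]
    constructor <;> intro h <;> nlinarith
  have habar : 0 < 4*b^2*Δ/σ2 := by positivity
  refine ⟨?_, ?_, ?_, ?_⟩
  · intro a ha
    have hpos : 0 < b^2 + Δ*a := by nlinarith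
    have h1 : 0 < E₁ a ↔ R a < b := by
      rw [show E₁ a = (b - R a)/a from rfl]
      rw [div_pos_iff]
      constructor
      · rintro (⟨h, _⟩ | ⟨_, h⟩) <;> linarith
      · intro h; left; exact ⟨by linarith, ha⟩
    rw [h1, hRlt a, Real.sqrt_lt' hpos, lt_div_iff₀ hσ]
    constructor <;> intro h <;> nlinarith
  · have hkey : (b^2 - Δ*(4*b^2*Δ/σ2))^2 + σ2*(4*b^2*Δ/σ2)^2
        = (b^2 + Δ*(4*b^2*Δ/σ2))^2 := by
      field_simp
      ring
    have hs : Real.sqrt ((b^2 - Δ*(4*b^2*Δ/σ2))^2 + σ2*(4*b^2*Δ/σ2)^2)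
        = b^2 + Δ*(4*b^2*Δ/σ2) := by
      rw [hkey, Real.sqrt_sq (by positivity)]
    have : R (4*b^2*Δ/σ2) = b := by
      rw [show R (4*b^2*Δ/σ2) = Real.sqrt ((b^2 - Δ*(4*b^2*Δ/σ2) +
        Real.sqrt ((b^2 - Δ*(4*b^2*Δ/σ2))^2 + σ2*(4*b^2*Δ/σ2)^2))/2) from rfl, hs]
      rw [show (b^2 - Δ*(4*b^2*Δ/σ2) + (b^2 + Δ*(4*b^2*Δ/σ2)))/2 = b^2 by ring]
      exact Real.sqrt_sq hb.le
    show (b - R (4*b^2*Δ/σ2))/(4*b^2*Δ/σ2) = 0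
    rw [this]
    simp
  · intro a ha
    have hapos : 0 < a := lt_trans habar ha
    have hpos : 0 ≤ b^2 + Δ*a := by nlinarith
    have hgt : b < R a := by
      rw [hRgt a, Real.lt_sqrt hpos]
      rw [div_lt_iff₀ hσ] at ha
      nlinarith
    show (b - R a)/a < 0
    apply div_neg_of_neg_of_pos (by linarith) hapos
  · intro a ha
    have hgt : b < R a := by
      rw [hRgt a]
      rcases le_or_gt 0 (b^2 + Δ*a) with h | h
      · rw [Real.lt_sqrt h]
        nlinarith [mul_neg_of_pos_of_neg (by positivity : (0:ℝ) < 4*b^2*Δ) ha,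
          mul_pos hσ (mul_pos_of_neg_of_neg ha ha)]
      · calc b^2 + Δ*a < 0 := h
          _ ≤ _ := Real.sqrt_nonneg _
    show 0 < (b - R a)/a
    exact div_pos_of_neg_of_neg (by linarith) ha
end
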